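/- For every unit quaternion q ∈ ℍ₁, the linear map u ↦ q u q* sends purely imaginary quaternions to purely imaginary quaternions of the same norm; identifying ℝ³ with the purely imaginary quaternions via the basis (i, j, k), the matrix Φ(q) of this map belongs to SO₃(ℝ). Moreover, Φ : ℍ₁ → SO₃(ℝ) is a surjective group homomorphism, and for q, q' ∈ ℍ₁ one has Φ(q) = Φ(q') if and only if q' = q or q' = −q. -/

import Mathlib

open Matrix Quaternion

/-- The space of `3 × 3` real matrices. -/
abbrev Mat3 := Matrix (Fin 3) (Fin 3) ℝ

/-- `SO₃(ℝ)`: real `3 × 3` matrices with `AᵀA = I₃` and `det A = 1`. -/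
def SO3 : Set Mat3 := {A | Aᵀ * A = 1 ∧ A.det = 1}

/-- Identification of `ℝ³` with purely imaginary quaternions via the basis `(i, j, k)`. -/
def toQuat (u : Fin 3 → ℝ) : ℍ[ℝ] := ⟨0, u 0, u 1, u 2⟩

/-- The vector of imaginary parts of a quaternion. -/
def imPart (x : ℍ[ℝ]) : Fin 3 → ℝ := ![x.imI, x.imJ, x.imK]

/-- The matrix, in the basis `(i, j, k)` of purely imaginary quaternions, of the linear map
`u ↦ q u q*`. -/
noncomputable def Phi (q : ℍ[ℝ]) : Mat3 :=
  Matrix.of fun i j => imPart (q * toQuat (fun k => if k = j then 1 else 0) * star q) i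

/-!
Conjugation `u ↦ q u q*` multiplies the real part of `u` by `|q|²` and is multiplicative in `q`,
so `Φ` is a homomorphism with `Φ(q*) = Φ(q)ᵀ` and `det Φ(q) = |q|⁶`; reading off the explicit
matrix of `Φ(p)` shows that its kernel is `{±1}`. A rotation `A` with `1 + tr A > 0` is `Φ` of the
normalisation of `(1 + tr A, A₂₁ - A₁₂, A₀₂ - A₂₀, A₁₀ - A₀₁)`. Since
`Φ(1) + Φ(i) + Φ(j) + Φ(k) = 0`, some `p ∈ {1, i, j, k}` has `1 + tr (Φ(p) A) > 0`, and then
`p* q` is a preimage of `A` whenever `Φ(q) = Φ(p) A`.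
-/

namespace Quaternion

lemma norm_eq_one_iff_normSq_eq_one {q : ℍ[ℝ]} : ‖q‖ = 1 ↔ normSq q = 1 := by
  rw [normSq_eq_norm_mul_self, mul_self_eq_one_iff,
    or_iff_left (by linarith [norm_nonneg q] : ‖q‖ ≠ -1)]

lemma star_mul_self_of_norm_eq_one {q : ℍ[ℝ]} (hq : ‖q‖ = 1) : star q * q = 1 := by
  rw [star_mul_self, norm_eq_one_iff_normSq_eq_one.mp hq, coe_one]

lemma mul_star_self_of_norm_eq_one {q : ℍ[ℝ]} (hq : ‖q‖ = 1) : q * star q = 1 := by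
  rw [self_mul_star, norm_eq_one_iff_normSq_eq_one.mp hq, coe_one]

lemma re_mul_mul_star (q u : ℍ[ℝ]) : (q * u * star q).re = normSq q * u.re := by
  simp only [re_mul, imI_mul, imJ_mul, imK_mul, re_star, imI_star, imJ_star, imK_star,
    normSq_def']
  ring

end Quaternion

open Quaternion

section toQuat

variable (u : Fin 3 → ℝ)

@[simp] lemma toQuat_re : (toQuat u).re = 0 := rfl
@[simp] lemma toQuat_imI : (toQuat u).imI = u 0 := rfl
@[simp] lemma toQuat_imJ : (toQuat u).imJ = u 1 := rfl
@[simp] lemma toQuat_imK : (toQuat u).imK = u 2 := rfl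

lemma imPart_toQuat : imPart (toQuat u) = u := by
  ext i; fin_cases i <;> rfl

end toQuat

lemma toQuat_imPart {x : ℍ[ℝ]} (hx : x.re = 0) : toQuat (imPart x) = x := by
  ext <;> simp [imPart, hx]

lemma Phi_mulVec (q : ℍ[ℝ]) (u : Fin 3 → ℝ) : Phi q *ᵥ u = imPart (q * toQuat u * star q) := by
  ext i
  fin_cases i <;>
    simp [Phi, imPart, mulVec, dotProduct, Fin.sum_univ_three, imI_mul, imJ_mul, imK_mul,
      re_mul] <;> ring

lemma Phi_eq_matrix (q : ℍ[ℝ]) : Phi q =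
    let w := q.re; let x := q.imI; let y := q.imJ; let z := q.imK
    !![w^2 + x^2 - y^2 - z^2, 2 * (x*y - w*z), 2 * (x*z + w*y);
       2 * (x*y + w*z), w^2 - x^2 + y^2 - z^2, 2 * (y*z - w*x);
       2 * (x*z - w*y), 2 * (y*z + w*x), w^2 - x^2 - y^2 + z^2] := by
  ext i j
  fin_cases i <;> fin_cases j <;>
    simp [Phi, imPart, imI_mul, imJ_mul, imK_mul, re_mul] <;> ring

lemma Phi_one : Phi 1 = 1 := by
  rw [ext_iff_mulVec]
  intro u
  rw [Phi_mulVec, one_mul, star_one, mul_one, imPart_toQuat, one_mulVec]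

lemma Phi_mul (q q' : ℍ[ℝ]) : Phi (q * q') = Phi q * Phi q' := by
  rw [ext_iff_mulVec]
  intro u
  have hre : (q' * toQuat u * star q').re = 0 := by
    rw [re_mul_mul_star, toQuat_re, mul_zero]
  rw [← mulVec_mulVec, Phi_mulVec, Phi_mulVec, Phi_mulVec, toQuat_imPart hre, star_mul]
  simp only [mul_assoc]

lemma Phi_neg (q : ℍ[ℝ]) : Phi (-q) = Phi q := by
  simp only [Phi, star_neg, neg_mul, mul_neg, neg_neg]

lemma Phi_smul (r : ℝ) (q : ℍ[ℝ]) : Phi (r • q) = r ^ 2 • Phi q := by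
  rw [Phi_eq_matrix, Phi_eq_matrix]
  ext i j
  fin_cases i <;> fin_cases j <;> simp <;> ring

lemma Phi_star (q : ℍ[ℝ]) : Phi (star q) = (Phi q)ᵀ := by
  rw [Phi_eq_matrix, Phi_eq_matrix]
  ext i j
  fin_cases i <;> fin_cases j <;> simp <;> ring

lemma det_Phi (q : ℍ[ℝ]) : (Phi q).det = normSq q ^ 3 := by
  rw [Phi_eq_matrix, det_fin_three, normSq_def']
  simp only [of_apply, cons_val', cons_val_zero, cons_val_one, cons_val, cons_val_fin_one]
  ring

lemma Phi_mem_SO3 {q : ℍ[ℝ]} (hq : ‖q‖ = 1) : Phi q ∈ SO3 := by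
  refine ⟨?_, ?_⟩
  · rw [← Phi_star, ← Phi_mul, star_mul_self_of_norm_eq_one hq, Phi_one]
  · rw [det_Phi, norm_eq_one_iff_normSq_eq_one.mp hq, one_pow]

lemma Phi_eq_one_iff {p : ℍ[ℝ]} : Phi p = 1 ↔ p = 1 ∨ p = -1 := by
  refine ⟨fun h => ?_, by rintro (rfl | rfl) <;> simp [Phi_neg, Phi_one]⟩
  rw [Phi_eq_matrix, ← Matrix.ext_iff] at h
  simp only [of_apply, cons_val', cons_val_fin_one, one_apply, Fin.forall_fin_succ, Fin.isValue,
    cons_val_zero, cons_val_succ, Fin.succ_zero_eq_one, Fin.succ_one_eq_two, IsEmpty.forall_iff,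
    and_true, ↓reduceIte, zero_ne_one, mul_eq_zero, OfNat.ofNat_ne_zero, false_or, Fin.reduceEq,
    Fin.succ_ne_zero] at h
  obtain ⟨⟨h00, h01, h02⟩, ⟨h10, h11, h12⟩, h20, h21, h22⟩ := h
  have hw : p.re ≠ 0 := by
    intro h0; rw [h0] at h11 h22; nlinarith
  have hx : p.imI = 0 := (mul_eq_zero.mp (by linarith : p.re * p.imI = 0)).resolve_left hw
  have hy : p.imJ = 0 := (mul_eq_zero.mp (by linarith : p.re * p.imJ = 0)).resolve_left hw
  have hz : p.imK = 0 := (mul_eq_zero.mp (by linarith : p.re * p.imK = 0)).resolve_left hw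
  have hw1 : p.re ^ 2 = 1 := by rw [hx, hy, hz] at h00; linarith
  rcases sq_eq_one_iff.mp hw1 with h1 | h1
  · left; ext <;> simp [h1, hx, hy, hz]
  · right; ext <;> simp [h1, hx, hy, hz]

lemma Phi_eq_Phi_iff {q q' : ℍ[ℝ]} (hq : ‖q‖ = 1) : Phi q = Phi q' ↔ q' = q ∨ q' = -q := by
  have hq' : q' = q * (star q * q') := by
    rw [← mul_assoc, mul_star_self_of_norm_eq_one hq, one_mul]
  constructor
  · intro h
    have hker : Phi (star q * q') = 1 := by
      rw [Phi_mul, ← h, ← Phi_mul, star_mul_self_of_norm_eq_one hq, Phi_one]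
    rcases Phi_eq_one_iff.mp hker with h1 | h1
    · left; rw [hq', h1, mul_one]
    · right; rw [hq', h1, mul_neg_one]
  · rintro (rfl | rfl)
    · rfl
    · exact (Phi_neg q).symm

lemma mul_mem_SO3 {A B : Mat3} (hA : A ∈ SO3) (hB : B ∈ SO3) : A * B ∈ SO3 := by
  refine ⟨?_, ?_⟩
  · rw [transpose_mul, mul_assoc, ← mul_assoc Aᵀ, hA.1, one_mul, hB.1]
  · rw [det_mul, hA.2, hB.2, one_mul]

lemma transpose_eq_adjugate_of_mem_SO3 {A : Mat3} (hA : A ∈ SO3) : Aᵀ = adjugate A := by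
  rw [← inv_eq_left_inv hA.1, Matrix.inv_def, hA.2, Ring.inverse_one, one_smul]

/-- If `A = Φ(q)` with `|q| = 1`, then `quatOfRotation A = 4 q.re • q`. -/
def quatOfRotation (A : Mat3) : ℍ[ℝ] :=
  ⟨1 + A.trace, A 2 1 - A 1 2, A 0 2 - A 2 0, A 1 0 - A 0 1⟩

lemma Phi_quatOfRotation {A : Mat3} (hA : A ∈ SO3) :
    Phi (quatOfRotation A) = (4 * (1 + A.trace)) • A := by
  have hcol := Matrix.ext_iff.mpr hA.1
  have hcof := Matrix.ext_iff.mpr (transpose_eq_adjugate_of_mem_SO3 hA)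
  simp only [mul_apply, transpose_apply, Fin.sum_univ_three, Fin.isValue, one_apply,
    Fin.forall_fin_succ, Fin.succ_zero_eq_one, Fin.succ_one_eq_two, IsEmpty.forall_iff, and_true,
    ↓reduceIte, zero_ne_one, Fin.reduceEq, Fin.succ_ne_zero, adjugate_fin_three, of_apply,
    cons_val', cons_val_fin_one, cons_val_zero, cons_val_succ] at hcol hcof
  rw [Phi_eq_matrix]
  ext i j
  fin_cases i <;> fin_cases j <;> simp [quatOfRotation, trace_fin_three] <;> grind

lemma exists_Phi_eq_of_one_add_trace_pos {A : Mat3} (hA : A ∈ SO3) (htr : 0 < 1 + A.trace) :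
    ∃ q : ℍ[ℝ], ‖q‖ = 1 ∧ Phi q = A := by
  set q₀ := quatOfRotation A
  have hPhi := Phi_quatOfRotation hA
  have hq₀ : ‖q₀‖ ^ 2 = 4 * (1 + A.trace) := by
    have hdet := congrArg det hPhi
    rw [det_Phi, det_smul, hA.2, Fintype.card_fin, mul_one] at hdet
    rw [sq, ← normSq_eq_norm_mul_self]
    exact (pow_left_inj₀ normSq_nonneg (by positivity) three_ne_zero).mp hdet
  have hne : q₀ ≠ 0 := by
    rintro h
    rw [h, norm_zero] at hq₀
    linarith
  refine ⟨‖q₀‖⁻¹ • q₀, norm_smul_inv_norm hne, ?_⟩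
  rw [Phi_smul, hPhi, inv_pow, hq₀, smul_smul, inv_mul_cancel₀ (by positivity), one_smul]

lemma exists_one_add_trace_Phi_mul_pos (A : Mat3) :
    ∃ p : ℍ[ℝ], ‖p‖ = 1 ∧ 0 < 1 + (Phi p * A).trace := by
  have hsum : Phi 1 + Phi (toQuat ![1, 0, 0]) + Phi (toQuat ![0, 1, 0]) +
      Phi (toQuat ![0, 0, 1]) = 0 := by
    simp only [Phi_eq_matrix]
    ext i j
    fin_cases i <;> fin_cases j <;> simp
  have htrace : (Phi 1 * A).trace + (Phi (toQuat ![1, 0, 0]) * A).trace +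
      (Phi (toQuat ![0, 1, 0]) * A).trace + (Phi (toQuat ![0, 0, 1]) * A).trace = 0 := by
    rw [← trace_add, ← trace_add, ← trace_add, ← add_mul, ← add_mul, ← add_mul, hsum, zero_mul,
      trace_zero]
  have hnorm : ∀ u : Fin 3 → ℝ, u 0 ^ 2 + u 1 ^ 2 + u 2 ^ 2 = 1 → ‖toQuat u‖ = 1 := by
    intro u hu
    rw [norm_eq_one_iff_normSq_eq_one, normSq_def']
    simpa using hu
  by_contra! h
  linarith [h 1 norm_one, h _ (hnorm ![1, 0, 0] (by simp)), h _ (hnorm ![0, 1, 0] (by simp)),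
    h _ (hnorm ![0, 0, 1] (by simp))]

lemma exists_Phi_eq_of_mem_SO3 {A : Mat3} (hA : A ∈ SO3) : ∃ q : ℍ[ℝ], ‖q‖ = 1 ∧ Phi q = A := by
  obtain ⟨p, hp, htr⟩ := exists_one_add_trace_Phi_mul_pos A
  obtain ⟨q, hq, hPhi⟩ :=
    exists_Phi_eq_of_one_add_trace_pos (mul_mem_SO3 (Phi_mem_SO3 hp) hA) htr
  refine ⟨star p * q, by rw [norm_mul, norm_star, hp, hq, one_mul], ?_⟩
  rw [Phi_mul, hPhi, ← mul_assoc, ← Phi_mul, star_mul_self_of_norm_eq_one hp, Phi_one, one_mul]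

theorem quaternion_rotation_correspondence :
    (∀ q : ℍ[ℝ], ‖q‖ = 1 → ∀ u : ℍ[ℝ], u.re = 0 →
      (q * u * star q).re = 0 ∧ ‖q * u * star q‖ = ‖u‖) ∧
    (∀ q : ℍ[ℝ], ‖q‖ = 1 →
      (∀ u : Fin 3 → ℝ, Phi q *ᵥ u = imPart (q * toQuat u * star q)) ∧ Phi q ∈ SO3) ∧
    (∀ q q' : ℍ[ℝ], ‖q‖ = 1 → ‖q'‖ = 1 → Phi (q * q') = Phi q * Phi q') ∧
    (∀ A ∈ SO3, ∃ q : ℍ[ℝ], ‖q‖ = 1 ∧ Phi q = A) ∧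
    (∀ q q' : ℍ[ℝ], ‖q‖ = 1 → ‖q'‖ = 1 → (Phi q = Phi q' ↔ q' = q ∨ q' = -q)) := by
  refine ⟨fun q hq u hu => ⟨?_, ?_⟩, fun q hq => ⟨Phi_mulVec q, Phi_mem_SO3 hq⟩,
    fun q q' _ _ => Phi_mul q q', fun A hA => exists_Phi_eq_of_mem_SO3 hA,
    fun q q' hq _ => Phi_eq_Phi_iff hq⟩
  · rw [re_mul_mul_star, hu, mul_zero]
  · rw [norm_mul, norm_mul, norm_star, hq, one_mul, mul_one]
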